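/- Let N ≥ 1, let U be an N×N complex unitary matrix, and let i, j ∈ [N] be indices such that Re(U_{j,i}) ≥ 0. Let v ∈ ℝ^N be a random vector with independent standard Gaussian N(0,1) coordinates. Then Pr( v_i ≥ 0 and Re((Uv)_j) ≥ 0 ) ≥ (1/4) · (1 + Re(U_{j,i}) · (1 − |U_{j,i}|)² / 8). -/

import Mathlib

open MeasureTheory ProbabilityTheory
open scoped BigOperators

/-!
Write `w = Re U_{j,·}` and split `Re (Uv)_j = w_i v_i + Y` with `Y = ∑_{k ≠ i} w_k v_k`: `Y` is a
centred Gaussian independent of `v_i`, of variance `t ≤ 1 - w_i² ≤ 1` because the rows of a unitary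
matrix are unit vectors. Writing `Y = √t Z` with `Z` standard, the event contains the disjoint union
of the quadrant `{v_i ≥ 0, Z ≥ 0}`, of probability `1/4`, and the wedge `{v_i ≥ 0, -w_i v_i ≤ Z < 0}`,
since `√t Z ≥ Z` when `Z < 0`. On the section of the wedge over `x ≥ 0` the standard density is at
least `φ(x)`, so the wedge has probability at least `w_i ∫₀^∞ x φ(x)² dx = w_i / (4π)`, which
exceeds `w_i (1 - |U_{j,i}|)² / 32`.
-/

open Real Set
open scoped NNReal ENNReal

lemma gaussianReal_Ici_zero {v : ℝ≥0} (hv : v ≠ 0) : gaussianReal 0 v (Ici 0) = 2⁻¹ := by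
  have := nullSingletonClass_gaussianReal (μ := 0) hv
  have h_symm : gaussianReal 0 v (Iic 0) = gaussianReal 0 v (Ici 0) := by
    conv_lhs => rw [← neg_zero, ← gaussianReal_map_neg]
    rw [Measure.map_apply measurable_neg measurableSet_Iic]
    congr 1
    ext x
    simp
  have h_cover := measure_union_add_inter (μ := gaussianReal 0 v) (Iic (0 : ℝ))
    (measurableSet_Ici (a := 0))
  rw [Iic_union_Ici, Iic_inter_Ici, Icc_self, measure_univ, measure_singleton, add_zero,
    h_symm, ← two_mul] at h_cover
  calc gaussianReal 0 v (Ici 0) = 2⁻¹ * (2 * gaussianReal 0 v (Ici 0)) :=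
        (ENNReal.inv_mul_cancel_left two_ne_zero ENNReal.ofNat_ne_top).symm
    _ = 2⁻¹ := by rw [← h_cover, mul_one]

lemma gaussianPDFReal_le_of_sq_le {v : ℝ≥0} {x y : ℝ} (h : x ^ 2 ≤ y ^ 2) :
    gaussianPDFReal 0 v y ≤ gaussianPDFReal 0 v x := by
  simp only [gaussianPDFReal, sub_zero]
  gcongr

lemma ofReal_mul_gaussianPDFReal_le_gaussianReal_Ico {v : ℝ≥0} (hv : v ≠ 0) {a : ℝ}
    (ha : 0 ≤ a) :
    ENNReal.ofReal (a * gaussianPDFReal 0 v a) ≤ gaussianReal 0 v (Ico (-a) 0) := by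
  rw [gaussianReal_apply 0 hv]
  calc ENNReal.ofReal (a * gaussianPDFReal 0 v a)
      = ∫⁻ _ in Ico (-a) 0, ENNReal.ofReal (gaussianPDFReal 0 v a) := by
        rw [setLIntegral_const, Real.volume_Ico,
          ← ENNReal.ofReal_mul (gaussianPDFReal_nonneg 0 v a)]
        ring_nf
    _ ≤ ∫⁻ x in Ico (-a) 0, gaussianPDF 0 v x := by
        refine setLIntegral_mono (measurable_gaussianPDF 0 v) fun x hx => ?_
        exact ENNReal.ofReal_le_ofReal (gaussianPDFReal_le_of_sq_le (by nlinarith [hx.1, hx.2]))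

lemma integral_Ioi_mul_exp_neg_sq : ∫ x in Ioi (0 : ℝ), x * rexp (-x ^ 2) = 2⁻¹ := by
  have h := integral_mul_cexp_neg_mul_sq (b := 1) (by simp)
  have : ∀ r : ℝ, (r : ℂ) * Complex.exp (-1 * r ^ 2) = ((r * rexp (-r ^ 2) : ℝ) : ℂ) := by
    intro r; push_cast; ring_nf
  simp_rw [this, integral_complex_ofReal, mul_one, ← Complex.ofReal_ofNat,
    ← Complex.ofReal_inv] at h
  exact_mod_cast h

lemma gaussianPDFReal_one_sq (x : ℝ) : gaussianPDFReal 0 1 x ^ 2 = (2 * π)⁻¹ * rexp (-x ^ 2) := by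
  rw [gaussianPDFReal, mul_pow, inv_pow, sq_sqrt (by positivity), ← Real.exp_nat_mul]
  congr 2 <;> push_cast <;> ring

lemma integral_Ioi_mul_gaussianPDFReal_sq :
    ∫ x in Ioi (0 : ℝ), x * gaussianPDFReal 0 1 x ^ 2 = (4 * π)⁻¹ := by
  simp_rw [gaussianPDFReal_one_sq, mul_left_comm _ (2 * π)⁻¹]
  rw [integral_const_mul, integral_Ioi_mul_exp_neg_sq]
  ring

lemma integrable_mul_gaussianPDFReal_sq :
    Integrable fun x : ℝ => x * gaussianPDFReal 0 1 x ^ 2 := by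
  simp_rw [gaussianPDFReal_one_sq, mul_left_comm _ (2 * π)⁻¹]
  simpa using (integrable_mul_exp_neg_mul_sq one_pos).const_mul (2 * π)⁻¹

lemma ofReal_le_gaussianReal_prod_wedge {w : ℝ} (hw0 : 0 ≤ w) (hw1 : w ≤ 1) :
    ENNReal.ofReal (w / (4 * π)) ≤ ((gaussianReal 0 1).prod (gaussianReal 0 1))
      {p : ℝ × ℝ | 0 ≤ p.1 ∧ -(w * p.1) ≤ p.2 ∧ p.2 < 0} := by
  have h_meas : MeasurableSet {p : ℝ × ℝ | 0 ≤ p.1 ∧ -(w * p.1) ≤ p.2 ∧ p.2 < 0} := by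
    measurability
  rw [Measure.prod_apply h_meas]
  calc ENNReal.ofReal (w / (4 * π))
      = ENNReal.ofReal (∫ x in Ioi 0, w * (x * gaussianPDFReal 0 1 x ^ 2)) := by
        rw [integral_const_mul, integral_Ioi_mul_gaussianPDFReal_sq, div_eq_mul_inv]
    _ = ∫⁻ x in Ioi 0, gaussianPDF 0 1 x * ENNReal.ofReal (w * x * gaussianPDFReal 0 1 x) := by
        rw [ofReal_integral_eq_lintegral_ofReal
          (integrable_mul_gaussianPDFReal_sq.const_mul w).integrableOn]
        · refine setLIntegral_congr_fun measurableSet_Ioi fun x hx => ?_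
          rw [gaussianPDF, ← ENNReal.ofReal_mul (gaussianPDFReal_nonneg 0 1 x)]
          ring_nf
        · exact (ae_restrict_iff' measurableSet_Ioi).2 (ae_of_all _ fun x (hx : 0 < x) => by
            positivity)
    _ = ∫⁻ x in Ioi 0, ENNReal.ofReal (w * x * gaussianPDFReal 0 1 x) ∂gaussianReal 0 1 := by
        rw [gaussianReal_of_var_ne_zero 0 one_ne_zero,
          setLIntegral_withDensity_eq_setLIntegral_mul _ (measurable_gaussianPDF 0 1)
            (by fun_prop) measurableSet_Ioi]
        rfl
    _ ≤ ∫⁻ x in Ioi 0, gaussianReal 0 1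
          (Prod.mk x ⁻¹' {p : ℝ × ℝ | 0 ≤ p.1 ∧ -(w * p.1) ≤ p.2 ∧ p.2 < 0}) ∂gaussianReal 0 1 := by
        refine setLIntegral_mono' measurableSet_Ioi fun x (hx : 0 < x) => ?_
        have h_section : Prod.mk x ⁻¹' {p : ℝ × ℝ | 0 ≤ p.1 ∧ -(w * p.1) ≤ p.2 ∧ p.2 < 0} =
            Ico (-(w * x)) 0 := by
          ext y
          simp [hx.le]
        rw [h_section]
        refine le_trans (ENNReal.ofReal_le_ofReal ?_)
          (ofReal_mul_gaussianPDFReal_le_gaussianReal_Ico one_ne_zero (by positivity))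
        exact mul_le_mul_of_nonneg_left (gaussianPDFReal_le_of_sq_le
          (pow_le_pow_left₀ (by positivity) (mul_le_of_le_one_left hx.le hw1) 2))
          (by positivity)
    _ ≤ _ := setLIntegral_le_lintegral _ _

lemma le_gaussianReal_prod_self_halfPlane {w σ : ℝ} (hw0 : 0 ≤ w) (hw1 : w ≤ 1) (hσ0 : 0 ≤ σ)
    (hσ1 : σ ≤ 1) :
    4⁻¹ + ENNReal.ofReal (w / (4 * π)) ≤ ((gaussianReal 0 1).prod (gaussianReal 0 1))
      {p : ℝ × ℝ | 0 ≤ p.1 ∧ 0 ≤ w * p.1 + σ * p.2} := by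
  set wedge := {p : ℝ × ℝ | 0 ≤ p.1 ∧ -(w * p.1) ≤ p.2 ∧ p.2 < 0}
  have h_quadrant : ((gaussianReal 0 1).prod (gaussianReal 0 1)) (Ici 0 ×ˢ Ici 0) = 4⁻¹ := by
    rw [Measure.prod_prod, gaussianReal_Ici_zero one_ne_zero, ← ENNReal.mul_inv (by simp) (by simp)]
    norm_num
  have h_disj : Disjoint (Ici (0 : ℝ) ×ˢ Ici 0) wedge :=
    Set.disjoint_left.2 fun p hQ hW => (not_le.2 hW.2.2) hQ.2
  have h_sub : Ici 0 ×ˢ Ici 0 ∪ wedge ⊆ {p : ℝ × ℝ | 0 ≤ p.1 ∧ 0 ≤ w * p.1 + σ * p.2} := by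
    rintro ⟨x, z⟩ (⟨hx, hz⟩ | ⟨hx, hz, hz'⟩)
    · exact ⟨hx, by simp only [mem_Ici] at hx hz; positivity⟩
    · exact ⟨hx, by nlinarith⟩
  calc 4⁻¹ + ENNReal.ofReal (w / (4 * π))
      ≤ ((gaussianReal 0 1).prod (gaussianReal 0 1)) (Ici 0 ×ˢ Ici 0) +
          ((gaussianReal 0 1).prod (gaussianReal 0 1)) wedge := by
        rw [h_quadrant]
        gcongr
        exact ofReal_le_gaussianReal_prod_wedge hw0 hw1
    _ = ((gaussianReal 0 1).prod (gaussianReal 0 1)) (Ici 0 ×ˢ Ici 0 ∪ wedge) :=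
        (measure_union h_disj (by measurability)).symm
    _ ≤ _ := measure_mono h_sub

lemma gaussianReal_prod_gaussianReal_eq_map (t : ℝ≥0) :
    (gaussianReal 0 1).prod (gaussianReal 0 t) =
      ((gaussianReal 0 1).prod (gaussianReal 0 1)).map (Prod.map id (√(t : ℝ) * ·)) := by
  rw [← Measure.map_prod_map _ _ measurable_id (measurable_const_mul _), Measure.map_id,
    gaussianReal_map_const_mul, mul_zero, mul_one]
  congr
  ext
  simp

lemma le_gaussianReal_prod_gaussianReal_halfPlane {w : ℝ} (hw0 : 0 ≤ w) (hw1 : w ≤ 1) {t : ℝ≥0}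
    (ht : t ≤ 1) :
    4⁻¹ + ENNReal.ofReal (w / (4 * π)) ≤ ((gaussianReal 0 1).prod (gaussianReal 0 t))
      {p : ℝ × ℝ | 0 ≤ p.1 ∧ 0 ≤ w * p.1 + p.2} := by
  rw [gaussianReal_prod_gaussianReal_eq_map, Measure.map_apply (by fun_prop) (by measurability)]
  exact le_gaussianReal_prod_self_halfPlane hw0 hw1 (sqrt_nonneg _)
    (sqrt_le_one.2 (by exact_mod_cast ht))

section GaussianVector

variable {ι : Type*} [Fintype ι]

lemma map_pi_gaussianReal_const_mul_eval (w : ℝ) (a : ι) :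
    (Measure.pi fun _ : ι => gaussianReal 0 1).map (fun v => w * v a) =
      gaussianReal 0 (‖w‖₊ ^ 2) := by
  change Measure.map ((w * ·) ∘ fun v : ι → ℝ => v a) _ = _
  rw [← Measure.map_map (measurable_const_mul w) (measurable_pi_apply a),
    (measurePreserving_eval _ a).map_eq, gaussianReal_map_const_mul, mul_zero, mul_one]
  congr 1
  ext
  simp

lemma map_pi_gaussianReal_sum_mul (s : Finset ι) (w : ι → ℝ) :
    (Measure.pi fun _ : ι => gaussianReal 0 1).map (fun v => ∑ k ∈ s, w k * v k) =
      gaussianReal 0 (∑ k ∈ s, ‖w k‖₊ ^ 2) := by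
  classical
  induction s using Finset.induction_on with
  | empty => simp
  | insert a s ha ih =>
    have h_indep : IndepFun (fun v : ι → ℝ => w a * v a) (fun v => ∑ k ∈ s, w k * v k)
        (Measure.pi fun _ : ι => gaussianReal 0 1) := by
      have := (iIndepFun_pi (μ := fun _ : ι => gaussianReal 0 1) (X := fun k x => w k * x)
        fun k => (measurable_const_mul (w k)).aemeasurable).indepFun_finsetSum_of_notMem
        (fun k => by fun_prop) ha
      simpa [Finset.sum_fn] using this.symm
    simp_rw [Finset.sum_insert ha]
    have h_sum := gaussianReal_add_gaussianReal_of_indepFun h_indep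
      (map_pi_gaussianReal_const_mul_eval (w a) a) ih
    rwa [zero_add] at h_sum

lemma indepFun_eval_sum_mul_pi_gaussianReal {i : ι} {s : Finset ι} (hi : i ∉ s) (w : ι → ℝ) :
    IndepFun (fun v : ι → ℝ => v i) (fun v => ∑ k ∈ s, w k * v k)
      (Measure.pi fun _ : ι => gaussianReal 0 1) := by
  have h := (iIndepFun_pi (μ := fun _ : ι => gaussianReal 0 1) (X := fun _ x => x)
    fun _ => aemeasurable_id).indepFun_finset {i} s (Finset.disjoint_singleton_left.2 hi)
    measurable_pi_apply
  have h_sum : Measurable fun f : s → ℝ => ∑ k : s, w k * f k := by fun_prop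
  convert h.comp (measurable_pi_apply ⟨i, Finset.mem_singleton_self i⟩) h_sum using 1
  · rfl
  ext v
  exact (Finset.sum_coe_sort s fun k => w k * v k).symm

lemma map_pi_gaussianReal_eval_prod_sum_mul {i : ι} {s : Finset ι} (hi : i ∉ s) (w : ι → ℝ) :
    (Measure.pi fun _ : ι => gaussianReal 0 1).map (fun v => (v i, ∑ k ∈ s, w k * v k)) =
      (gaussianReal 0 1).prod (gaussianReal 0 (∑ k ∈ s, ‖w k‖₊ ^ 2)) := by
  rw [(indepFun_eval_sum_mul_pi_gaussianReal hi w).map_prod_eq_prod_map_map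
    (measurable_pi_apply i).aemeasurable (Measurable.aemeasurable (by fun_prop)),
    (measurePreserving_eval _ i).map_eq, map_pi_gaussianReal_sum_mul]

lemma pi_gaussianReal_eval_nonneg_sum_nonneg [DecidableEq ι] (w : ι → ℝ) (i : ι) :
    (Measure.pi fun _ : ι => gaussianReal 0 1) {v | 0 ≤ v i ∧ 0 ≤ ∑ x, w x * v x} =
      ((gaussianReal 0 1).prod (gaussianReal 0 (∑ k ∈ Finset.univ.erase i, ‖w k‖₊ ^ 2)))
        {p : ℝ × ℝ | 0 ≤ p.1 ∧ 0 ≤ w i * p.1 + p.2} := by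
  rw [← map_pi_gaussianReal_eval_prod_sum_mul (Finset.notMem_erase i _),
    Measure.map_apply (Measurable.prodMk (measurable_pi_apply i) (by fun_prop)) (by measurability)]
  congr 1
  ext v
  simp only [Set.mem_ofPred_eq, Set.mem_preimage]
  rw [← Finset.add_sum_erase _ _ (Finset.mem_univ i)]

end GaussianVector

lemma Matrix.sum_norm_sq_row_of_mem_unitaryGroup {n 𝕜 : Type*} [Fintype n] [DecidableEq n]
    [RCLike 𝕜] {U : Matrix n n 𝕜} (hU : U ∈ Matrix.unitaryGroup n 𝕜) (j : n) :
    ∑ x, ‖U j x‖ ^ 2 = 1 := by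
  have h := congr_fun (congr_fun (Matrix.mem_unitaryGroup_iff.1 hU) j) j
  simp only [Matrix.mul_apply, Matrix.star_apply, RCLike.star_def, RCLike.mul_conj,
    Matrix.one_apply_eq] at h
  exact_mod_cast h

lemma Matrix.sum_nnnorm_re_sq_le_one_of_mem_unitaryGroup {n : Type*} [Fintype n] [DecidableEq n]
    {U : Matrix n n ℂ} (hU : U ∈ Matrix.unitaryGroup n ℂ) (j : n) (s : Finset n) :
    ∑ k ∈ s, ‖(U j k).re‖₊ ^ 2 ≤ 1 := by
  rw [← NNReal.coe_le_coe, NNReal.coe_one, ← Matrix.sum_norm_sq_row_of_mem_unitaryGroup hU j]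
  push_cast
  refine (Finset.sum_le_sum_of_subset_of_nonneg (Finset.subset_univ s)
    fun _ _ _ => by positivity).trans (Finset.sum_le_sum fun k _ => ?_)
  gcongr
  exact Complex.abs_re_le_norm _

lemma Matrix.re_mulVec_ofReal {m n : Type*} [Fintype n] (U : Matrix m n ℂ) (v : n → ℝ) (j : m) :
    (U.mulVec (fun x => (v x : ℂ)) j).re = ∑ x, (U j x).re * v x := by
  simp [Matrix.mulVec, dotProduct, Complex.re_sum]

theorem correlated_sign_probability_lower_bound_general
    (N : ℕ) (U : Matrix (Fin N) (Fin N) ℂ)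
    (hU : U ∈ Matrix.unitaryGroup (Fin N) ℂ)
    (i j : Fin N) (hre : 0 ≤ (U j i).re) :
    ENNReal.ofReal ((1 / 4 : ℝ) * (1 + (U j i).re * (1 - ‖U j i‖) ^ 2 / 8)) ≤
      (Measure.pi fun _ : Fin N => gaussianReal 0 1)
        {v : Fin N → ℝ | 0 ≤ v i ∧ 0 ≤ (U.mulVec (fun x => (v x : ℂ)) j).re} := by
  set w : Fin N → ℝ := fun x => (U j x).re
  have h_entry : ‖U j i‖ ≤ 1 := entry_norm_bound_of_unitary hU j i
  calc ENNReal.ofReal ((1 / 4 : ℝ) * (1 + (U j i).re * (1 - ‖U j i‖) ^ 2 / 8))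
      ≤ 4⁻¹ + ENNReal.ofReal (w i / (4 * π)) := by
        rw [← ENNReal.ofReal_ofNat, ← ENNReal.ofReal_inv_of_pos four_pos,
          ← ENNReal.ofReal_add (by norm_num) (by positivity)]
        refine ENNReal.ofReal_le_ofReal ?_
        have h_sq : (1 - ‖U j i‖) ^ 2 ≤ 1 := by nlinarith [norm_nonneg (U j i)]
        have h_pi : 4 * π ≤ 32 := by linarith [pi_lt_four]
        calc 1 / 4 * (1 + w i * (1 - ‖U j i‖) ^ 2 / 8) ≤ 4⁻¹ + w i / 32 := by nlinarith
          _ ≤ 4⁻¹ + w i / (4 * π) := by gcongr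
    _ ≤ ((gaussianReal 0 1).prod (gaussianReal 0 (∑ k ∈ Finset.univ.erase i, ‖w k‖₊ ^ 2)))
          {p : ℝ × ℝ | 0 ≤ p.1 ∧ 0 ≤ w i * p.1 + p.2} :=
        le_gaussianReal_prod_gaussianReal_halfPlane hre ((Complex.re_le_norm _).trans h_entry)
          (Matrix.sum_nnnorm_re_sq_le_one_of_mem_unitaryGroup hU j _)
    _ = _ := by
        rw [← pi_gaussianReal_eval_nonneg_sum_nonneg]
        simp_rw [Matrix.re_mulVec_ofReal]
        rfl

/-- For a unitary `U` with `Re(U_{j,i}) ≥ 0` and a standard Gaussian vector `v`,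
`Pr(v_i ≥ 0 and Re((Uv)_j) ≥ 0) ≥ (1/4)·(1 + Re(U_{j,i})·(1 - |U_{j,i}|)²/8)`. -/
theorem correlated_sign_probability_lower_bound
    (N : ℕ) (hN : 1 ≤ N) (U : Matrix (Fin N) (Fin N) ℂ)
    (hU : U ∈ Matrix.unitaryGroup (Fin N) ℂ)
    (i j : Fin N) (hre : 0 ≤ (U j i).re) :
    ENNReal.ofReal ((1 / 4 : ℝ) * (1 + (U j i).re * (1 - ‖U j i‖) ^ 2 / 8)) ≤
      (Measure.pi fun _ : Fin N => gaussianReal 0 1)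
        {v : Fin N → ℝ | 0 ≤ v i ∧ 0 ≤ (U.mulVec (fun x => (v x : ℂ)) j).re} :=
  correlated_sign_probability_lower_bound_general N U hU i j hre
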